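/- arXiv:2305.02816 — 5 statements merged into one kernel-verified Lean document; each statement's English description precedes it below -/
import Mathlib

section
/- Let c₁, c₂ ∈ {0,1}^d be bitstrings, let p ∈ [0,1/2), and let b_p be a random vector whose d bits are independent Bernoulli(p). Then the probability that the Hamming distance from c₁ ⊕ b_p to c₂ is at most the Hamming distance from c₁ ⊕ b_p to c₁ is at most exp(-((1-2p)²/(4p+2))·H(c₁,c₂)), where H denotes Hamming distance. -/
/-!
Let `S` be the set of coordinates where `c₁` and `c₂` differ, `k = |S|`. The flipped word
`c₁ ⊕ b` is at least as close to `c₂` as to `c₁` exactly when `b` flips at least half of the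
coordinates in `S`. For such `b` the Bernoulli weight of `b` on `S` is `p^t (1-p)^(k-t)` with
`2t ≥ k`, which is at most `√(p(1-p))^k` because `p ≤ 1 - p`. Replacing the weight on `S` by this
bound and summing over all `b` gives `(2√(p(1-p)))^k`, and
`4p(1-p) = 1 - (1-2p)² ≤ exp(-(1-2p)²)` turns this into the exponential bound.
-/

open Finset

lemma hammingDist_xor_add_two_mul_card {ι : Type*} [Fintype ι] (c₁ c₂ b : ι → Bool) :
    hammingDist (fun i => xor (c₁ i) (b i)) c₂ + 2 * #{i | c₁ i ≠ c₂ i ∧ b i} =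
      hammingDist (fun i => xor (c₁ i) (b i)) c₁ + hammingDist c₁ c₂ := by
  simp only [hammingDist, card_filter, mul_sum, ← sum_add_distrib]
  refine sum_congr rfl fun i _ => ?_
  cases c₁ i <;> cases c₂ i <;> cases b i <;> rfl

lemma pow_mul_pow_le_sqrt_mul_pow {a b : ℝ} {m n : ℕ} (ha : 0 ≤ a) (hab : a ≤ b) (hmn : m ≤ n) :
    a ^ n * b ^ m ≤ √(a * b) ^ (n + m) := by
  have hb : 0 ≤ b := ha.trans hab
  obtain ⟨j, rfl⟩ := Nat.exists_eq_add_of_le hmn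
  rw [← pow_le_pow_iff_left₀ (by positivity) (by positivity) two_ne_zero]
  calc (a ^ (m + j) * b ^ m) ^ 2 = (a * b) ^ (2 * m) * (a * a) ^ j := by ring
    _ ≤ (a * b) ^ (2 * m) * (a * b) ^ j := by gcongr
    _ = (a * b) ^ (m + j + m) := by ring
    _ = (√(a * b) ^ (m + j + m)) ^ 2 := by rw [pow_right_comm, Real.sq_sqrt (by positivity)]

lemma two_sqrt_mul_one_sub_le_exp {p : ℝ} (hp : 0 ≤ p) :
    2 * √(p * (1 - p)) ≤ Real.exp (-((1 - 2 * p) ^ 2 / (4 * p + 2))) := by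
  set c := (1 - 2 * p) ^ 2 / (4 * p + 2)
  have hc : 2 * c ≤ (1 - 2 * p) ^ 2 := by
    rw [mul_div_assoc', div_le_iff₀ (by positivity)]
    nlinarith [sq_nonneg (1 - 2 * p)]
  have h_two_sqrt : 2 * √(p * (1 - p)) = √(4 * (p * (1 - p))) := by
    rw [Real.sqrt_mul (by norm_num : (0 : ℝ) ≤ 4) (p * (1 - p)), show (4 : ℝ) = 2 ^ 2 by norm_num,
      Real.sqrt_sq two_pos.le]
  rw [h_two_sqrt, Real.sqrt_le_iff, ← Real.exp_nat_mul]
  refine ⟨(Real.exp_pos _).le, ?_⟩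
  calc 4 * (p * (1 - p)) = 1 - (1 - 2 * p) ^ 2 := by ring
    _ ≤ (2 : ℕ) * -c + 1 := by push_cast; linarith
    _ ≤ Real.exp ((2 : ℕ) * -c) := Real.add_one_le_exp _

section Bernoulli

variable {ι : Type*} {p : ℝ}

lemma prod_bernoulli_le_sqrt_pow (S : Finset ι) (b : ι → Bool) (hp0 : 0 ≤ p) (hp : p ≤ 1 - p)
    (hb : #S ≤ 2 * #{i ∈ S | b i}) :
    ∏ i ∈ S, (if b i then p else 1 - p) ≤ √(p * (1 - p)) ^ #S := by
  have h_card := card_filter_add_card_filter_not (s := S) (fun i => b i = true)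
  rw [prod_ite, prod_const, prod_const]
  convert pow_mul_pow_le_sqrt_mul_pow hp0 hp (by omega : #{i ∈ S | ¬b i} ≤ #{i ∈ S | b i})
  omega

variable [Fintype ι] [DecidableEq ι]

lemma prod_bernoulli_le_prod_ite_mem (S : Finset ι) (b : ι → Bool) (hp0 : 0 ≤ p)
    (hp : p ≤ 1 - p) (hb : #S ≤ 2 * #{i ∈ S | b i}) :
    ∏ i, (if b i then p else 1 - p) ≤
      ∏ i, (if i ∈ S then √(p * (1 - p)) else if b i then p else 1 - p) := by
  rw [← prod_mul_prod_compl S, ← prod_mul_prod_compl S (fun i => if i ∈ S then _ else _),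
    prod_congr rfl fun i hi => if_pos hi, prod_const,
    prod_congr rfl fun i hi => if_neg (mem_compl.1 hi)]
  exact mul_le_mul_of_nonneg_right (prod_bernoulli_le_sqrt_pow S b hp0 hp hb)
    (prod_nonneg fun i _ => by split_ifs <;> linarith)

lemma sum_prod_ite_mem_bernoulli (S : Finset ι) (r : ℝ) :
    ∑ b : ι → Bool, ∏ i, (if i ∈ S then r else if b i then p else 1 - p) = (2 * r) ^ #S := by
  have h_factor (i : ι) : ∑ x : Bool, (if i ∈ S then r else if x then p else 1 - p) =
      if i ∈ S then 2 * r else 1 := by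
    split_ifs <;> simp only [Fintype.sum_bool, Bool.false_eq_true, if_true, if_false] <;> ring
  rw [← Fintype.prod_sum (fun i (x : Bool) => if i ∈ S then r else if x then p else 1 - p),
    prod_congr rfl fun i _ => h_factor i, Fintype.prod_ite_mem, prod_const]

end Bernoulli

/-- For bitstrings `c₁ c₂ ∈ {0,1}^d` and `b_p ~ Bern(p)^d` with `p ∈ [0,1/2)`,
`Pr[H(c₁ ⊕ b_p, c₂) ≤ H(c₁ ⊕ b_p, c₁)] ≤ exp(-((1-2p)²/(4p+2))·H(c₁,c₂))`. -/
theorem flip_closer_prob_bound (d : ℕ) (c₁ c₂ : Fin d → Bool) (p : ℝ)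
    (hp0 : 0 ≤ p) (hp : p < 1 / 2) :
    (∑ b ∈ Finset.univ.filter (fun b : Fin d → Bool =>
        hammingDist (fun i => xor (c₁ i) (b i)) c₂ ≤
          hammingDist (fun i => xor (c₁ i) (b i)) c₁),
      ∏ i, (if b i then p else 1 - p)) ≤
    Real.exp (-((1 - 2 * p) ^ 2 / (4 * p + 2)) * (hammingDist c₁ c₂ : ℝ)) := by
  set E := univ.filter (fun b : Fin d → Bool =>
    hammingDist (fun i => xor (c₁ i) (b i)) c₂ ≤ hammingDist (fun i => xor (c₁ i) (b i)) c₁)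
  set S : Finset (Fin d) := {i | c₁ i ≠ c₂ i}
  have hS : hammingDist c₁ c₂ = #S := rfl
  have h_flips : ∀ b ∈ E, #S ≤ 2 * #{i ∈ S | b i} := by
    intro b hb
    have := hammingDist_xor_add_two_mul_card c₁ c₂ b
    have := (mem_filter.1 hb).2
    rw [filter_filter]
    omega
  calc _ ≤ ∑ b ∈ E, ∏ i, (if i ∈ S then √(p * (1 - p)) else if b i then p else 1 - p) :=
        sum_le_sum fun b hb => prod_bernoulli_le_prod_ite_mem S b hp0 (by linarith) (h_flips b hb)
    _ ≤ ∑ b : Fin d → Bool, ∏ i, (if i ∈ S then √(p * (1 - p)) else if b i then p else 1 - p) :=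
        sum_le_sum_of_subset_of_nonneg (filter_subset _ _) fun b _ _ =>
          prod_nonneg fun i _ => by split_ifs <;> first | positivity | linarith
    _ = (2 * √(p * (1 - p))) ^ #S := sum_prod_ite_mem_bernoulli S _
    _ ≤ Real.exp (-((1 - 2 * p) ^ 2 / (4 * p + 2))) ^ #S := by
        gcongr
        exact two_sqrt_mul_one_sub_le_exp hp0
    _ = _ := by rw [← Real.exp_nat_mul, hS, mul_comm]
end

section
/- Let C_enc : [m] → {0,1}^d be an encoding map and define the complement code L_enc by L_enc(v) = C_enc(v) · 0^D if v is even and L_enc(v) = complement(C_enc(v)) · 1^D if v is odd, where D is a fixed natural number and · denotes concatenation. Define K_enc(v) = C_enc(v) · L_enc(v) · C_enc(v) · L_enc(v). Then for every v ∈ [m-1], the Hamming distance between K_enc(v) and K_enc(v+1) equals 2(d + D), independent of v. -/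
/-!
Exactly one of `v`, `v + 1` is even, so comparing the blocks `C·L` of `v` and `v + 1` compares one
`C`-word both with the other and with its complement, which together disagree in exactly `d`
places, while the paddings `0^D` and `1^D` disagree in all `D`. Hence consecutive blocks are at
distance `d + D`, and `K` repeats the block twice.
-/

theorem hammingDist_finAppend {β : Type*} [DecidableEq β] {m n : ℕ} (a c : Fin m → β)
    (b e : Fin n → β) :
    hammingDist (Fin.append a b) (Fin.append c e) = hammingDist a c + hammingDist b e := by
  simp only [hammingDist, Finset.card_filter, Fin.sum_univ_add, Fin.append_left, Fin.append_right]

section Complement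

variable {ι : Type*} [Fintype ι]

theorem hammingDist_add_hammingDist_not (a c : ι → Bool) :
    hammingDist a c + hammingDist a (fun i => !c i) = Fintype.card ι := by
  simp only [hammingDist, Finset.card_filter, ← Finset.sum_add_distrib]
  have each_once : ∀ i, ((if a i ≠ c i then 1 else 0) + if a i ≠ !c i then 1 else 0) = 1 := by
    intro i
    cases a i <;> cases c i <;> rfl
  simp only [each_once, Finset.sum_const, Finset.card_univ, smul_eq_mul, mul_one]

theorem hammingDist_not_self (a : ι → Bool) :
    hammingDist a (fun i => !a i) = Fintype.card ι := by
  simpa using hammingDist_add_hammingDist_not a a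

end Complement

theorem hammingDist_evenBlock_oddBlock {d D : ℕ} (a c : Fin d → Bool) :
    hammingDist (Fin.append a (Fin.append a fun _ : Fin D => false))
      (Fin.append c (Fin.append (fun i => !c i) fun _ => true)) = d + D := by
  have padding : hammingDist (fun _ : Fin D => false) (fun _ => true) = D := by
    simpa using hammingDist_not_self (fun _ : Fin D => false)
  have complement := hammingDist_add_hammingDist_not a c
  rw [hammingDist_finAppend, hammingDist_finAppend, padding]
  simp only [Fintype.card_fin] at complement
  omega

theorem constant_consecutive_distance_general (d D : ℕ)
    (Cenc : ℕ → Fin d → Bool)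
    (Lenc : ℕ → Fin (d + D) → Bool)
    (hL : ∀ v, Lenc v = if Even v then Fin.append (Cenc v) (fun _ => false)
        else Fin.append (fun i => !(Cenc v i)) (fun _ => true))
    (Kenc : ℕ → Fin (d + (d + D) + (d + (d + D))) → Bool)
    (hK : ∀ v, Kenc v =
      Fin.append (Fin.append (Cenc v) (Lenc v)) (Fin.append (Cenc v) (Lenc v)))
    (v : ℕ) :
    hammingDist (Kenc v) (Kenc (v + 1)) = 2 * (d + D) := by
  have block : hammingDist (Fin.append (Cenc v) (Lenc v))
      (Fin.append (Cenc (v + 1)) (Lenc (v + 1))) = d + D := by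
    rw [hL v, hL (v + 1)]
    rcases Nat.even_or_odd v with hv | hv
    · rw [if_pos hv, if_neg (Nat.not_even_iff_odd.mpr hv.add_one)]
      exact hammingDist_evenBlock_oddBlock _ _
    · rw [if_neg (Nat.not_even_iff_odd.mpr hv), if_pos hv.add_one, hammingDist_comm]
      exact hammingDist_evenBlock_oddBlock _ _
  rw [hK v, hK (v + 1), hammingDist_finAppend, block]
  ring

/-- Constant consecutive distance: with the complement code `L` (padding length `D`) and
`K(v) = C(v)·L(v)·C(v)·L(v)`, consecutive codewords of `K` are at Hamming distance
exactly `2(d+D)`, independent of `v`. -/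
theorem constant_consecutive_distance (m d D : ℕ)
    (Cenc : ℕ → Fin d → Bool)
    (Lenc : ℕ → Fin (d + D) → Bool)
    (hL : ∀ v, Lenc v = if Even v then Fin.append (Cenc v) (fun _ => false)
        else Fin.append (fun i => !(Cenc v i)) (fun _ => true))
    (Kenc : ℕ → Fin (d + (d + D) + (d + (d + D))) → Bool)
    (hK : ∀ v, Kenc v =
      Fin.append (Fin.append (Cenc v) (Lenc v)) (Fin.append (Cenc v) (Lenc v)))
    (v : ℕ) (hv : v + 1 < m) :
    hammingDist (Kenc v) (Kenc (v + 1)) = 2 * (d + D) :=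
  constant_consecutive_distance_general d D Cenc Lenc hL Kenc hK v
end

section
/- Let C = (C_enc, C_dec) be a code from [m] to {0,1}^d with minimum distance D, and let 0 < p < 1/2. Let c_p be a vector of D independent Bernoulli(p) bits. Then the failure probability P_p(C) = max_v Pr[C_dec(C_enc(v) ⊕ b_p) ≠ v], where b_p ~ Bern(p)^d, satisfies P_p(C) ≥ Pr[||c_p||₁ > D/2] + (1/2)·Pr[||c_p||₁ = D/2]. -/
/-!
Take messages `u ≠ v` whose codewords differ exactly on a set `S` of `D` coordinates, and let
`T` flip a noise pattern on `S`. Since `Cenc u ⊕ b = Cenc v ⊕ T b`, the decoder fails on `u`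
under noise `b` or on `v` under noise `T b`, so `P_u + P_v ≥ ∑_b min (Pr b) (Pr (T b))`.
For `p < 1/2` a pattern with `k` ones on `S` is at most as likely as its flip (which has
`D - k`) when `2k ≥ D`; hence the sum of minima is `2 Pr[k > D/2] + Pr[k = D/2]`, and `k` is
distributed as `‖c_p‖₁`.
-/

open Finset

section Bernoulli

variable {ι κ : Type*} [Fintype ι] [Fintype κ]

def bernWeight (p : ℝ) (b : ι → Bool) : ℝ := ∏ i, if b i then p else 1 - p

lemma sum_bernWeight [DecidableEq ι] (p : ℝ) : ∑ b : ι → Bool, bernWeight p b = 1 := by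
  simp [bernWeight, ← Fintype.prod_sum fun (_ : ι) (x : Bool) => if x then p else 1 - p]

lemma bernWeight_nonneg {p : ℝ} (hp0 : 0 ≤ p) (hp1 : p ≤ 1) (b : ι → Bool) :
    0 ≤ bernWeight p b :=
  prod_nonneg fun i _ => by split <;> linarith

lemma bernWeight_comp_equiv (p : ℝ) (e : κ ≃ ι) (c : ι → Bool) :
    bernWeight p (c ∘ e) = bernWeight p c :=
  e.prod_comp fun i => if c i then p else 1 - p

lemma sum_mul_bernWeight_restrict [DecidableEq ι] (p : ℝ) (P : ι → Prop) [DecidablePred P]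
    (F : ({i // P i} → Bool) → ℝ) :
    ∑ b : ι → Bool, F (fun i => b i) * bernWeight p b
      = ∑ c : {i // P i} → Bool, F c * bernWeight p c := by
  rw [← (Equiv.piEquivPiSubtypeProd P fun _ => Bool).symm.sum_comp, Fintype.sum_prod_type]
  refine sum_congr rfl fun c _ => ?_
  have hsplit : ∀ c', bernWeight p ((Equiv.piEquivPiSubtypeProd P fun _ => Bool).symm (c, c'))
      = bernWeight p c * bernWeight p c' := fun c' => by
    rw [bernWeight, ← Fintype.prod_subtype_mul_prod_subtype P]
    congr 1 <;> refine prod_congr rfl fun i _ => ?_ <;> simp [i.2]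
  have hrestrict : ∀ c', (fun i : {i // P i} =>
      (Equiv.piEquivPiSubtypeProd P fun _ => Bool).symm (c, c') i) = c :=
    fun c' => funext fun i => by simp [i.2]
  simp only [hsplit, hrestrict, ← mul_assoc, ← mul_sum, sum_bernWeight, mul_one]

lemma card_filter_comp_equiv (e : κ ≃ ι) (c : ι → Bool) :
    #{j | (c ∘ e) j = true} = #{i | c i = true} := by
  simp only [card_filter, Function.comp_apply]
  exact e.sum_comp fun i => if c i = true then 1 else 0

lemma sum_card_filter_mul_bernWeight_comp_equiv [DecidableEq ι] [DecidableEq κ] (p : ℝ)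
    (e : κ ≃ ι) (f : ℕ → ℝ) :
    ∑ c : ι → Bool, f #{i | c i = true} * bernWeight p c
      = ∑ c : κ → Bool, f #{j | c j = true} * bernWeight p c := by
  refine Fintype.sum_equiv (e.symm.arrowCongr (Equiv.refl Bool)) _ _ fun c => ?_
  change _ = f #{j | (c ∘ e) j = true} * bernWeight p (c ∘ e)
  rw [card_filter_comp_equiv, bernWeight_comp_equiv]

lemma sum_card_filter_mul_bernWeight [DecidableEq ι] (p : ℝ) (S : Finset ι) (f : ℕ → ℝ) :
    ∑ b : ι → Bool, f #{i ∈ S | b i = true} * bernWeight p b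
      = ∑ c : Fin #S → Bool, f #{j | c j = true} * bernWeight p c := by
  have hcount : ∀ b : ι → Bool, #{i ∈ S | b i = true} = #{j : S | b j = true} := fun b => by
    rw [card_filter, card_filter, sum_coe_sort S fun i => if b i = true then 1 else 0]
  simp only [hcount]
  rw [sum_mul_bernWeight_restrict p (· ∈ S) fun c => f #{j | c j = true}]
  convert sum_card_filter_mul_bernWeight_comp_equiv p S.equivFin.symm f

end Bernoulli

lemma pow_mul_pow_le_pow_mul_pow {R : Type*} [CommSemiring R] [PartialOrder R]
    [IsOrderedRing R] {a b : R} (ha : 0 ≤ a) (hab : a ≤ b) {j k : ℕ} (hjk : j ≤ k) :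
    a ^ k * b ^ j ≤ a ^ j * b ^ k := by
  obtain ⟨n, rfl⟩ := Nat.exists_eq_add_of_le hjk
  have hprod : 0 ≤ (a * b) ^ j := pow_nonneg (mul_nonneg ha (ha.trans hab)) j
  calc a ^ (j + n) * b ^ j = (a * b) ^ j * a ^ n := by ring
    _ ≤ (a * b) ^ j * b ^ n := by gcongr
    _ = a ^ j * b ^ (j + n) := by ring

lemma prod_ite_eq_pow_mul_pow {ι : Type*} (p : ℝ) (S : Finset ι) (b : ι → Bool) :
    ∏ i ∈ S, (if b i then p else 1 - p)
      = p ^ #{i ∈ S | b i = true} * (1 - p) ^ (#S - #{i ∈ S | b i = true}) := by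
  rw [prod_ite, prod_const, prod_const,
    ← card_filter_add_card_filter_not (s := S) (fun i => b i = true)]
  simp

noncomputable def tailWeight (D n : ℕ) : ℝ :=
  if D < 2 * n then 1 else if 2 * n = D then 1 / 2 else 0

lemma sum_filter_add_half_sum_filter_eq {α : Type*} [Fintype α] (D : ℕ) (n : α → ℕ)
    (w : α → ℝ) :
    ∑ a ∈ univ.filter (fun a => D < 2 * n a), w a
      + 1 / 2 * ∑ a ∈ univ.filter (fun a => 2 * n a = D), w a
      = ∑ a, tailWeight D (n a) * w a := by
  simp only [sum_filter, mul_sum, ← sum_add_distrib]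
  refine sum_congr rfl fun a _ => ?_
  unfold tailWeight
  split_ifs <;> first | omega | ring

lemma tailWeight_mul_add_tailWeight_mul_le_min {D k : ℕ} (hk : k ≤ D) {x y : ℝ}
    (hxy : D ≤ 2 * k → x ≤ y) (hyx : 2 * k ≤ D → y ≤ x) :
    tailWeight D k * x + tailWeight D (D - k) * y ≤ min x y := by
  unfold tailWeight
  rcases lt_trichotomy D (2 * k) with h | h | h
  · rw [if_pos h, if_neg (by omega), if_neg (by omega)]
    simpa using hxy h.le
  · rw [if_neg (by omega), if_pos (by omega), if_neg (by omega), if_pos (by omega)]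
    have := hxy h.le
    have := hyx h.ge
    rw [le_min_iff]
    constructor <;> linarith
  · rw [if_neg (by omega), if_neg (by omega), if_pos (by omega)]
    simpa using hyx h.le

lemma two_mul_sum_le_sum_filter_add_sum_filter {α : Type*} [Fintype α] {T : α → α}
    (hT : Function.Involutive T) {w g : α → ℝ} (hw : ∀ a, 0 ≤ w a) (P Q : α → Prop)
    [DecidablePred P] [DecidablePred Q] (hPQ : ∀ a, P a ∨ Q (T a))
    (hg : ∀ a, g a + g (T a) ≤ min (w a) (w (T a))) :
    2 * ∑ a, g a ≤ ∑ a ∈ univ.filter P, w a + ∑ a ∈ univ.filter Q, w a := by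
  have hgT : ∑ a, g (T a) = ∑ a, g a := Fintype.sum_bijective T hT.bijective _ _ fun _ => rfl
  have hQT : ∑ a, (if Q (T a) then w (T a) else 0) = ∑ a ∈ univ.filter Q, w a := by
    rw [sum_filter]
    exact Fintype.sum_bijective T hT.bijective _ _ fun _ => rfl
  calc 2 * ∑ a, g a = ∑ a, (g a + g (T a)) := by rw [sum_add_distrib, hgT]; ring
    _ ≤ ∑ a, min (w a) (w (T a)) := sum_le_sum fun a _ => hg a
    _ ≤ ∑ a, ((if P a then w a else 0) + if Q (T a) then w (T a) else 0) := by
      refine sum_le_sum fun a _ => ?_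
      have := min_le_left (w a) (w (T a))
      have := min_le_right (w a) (w (T a))
      rcases hPQ a with h | h <;> split_ifs <;> linarith [hw a, hw (T a)]
    _ = ∑ a ∈ univ.filter P, w a + ∑ a ∈ univ.filter Q, w a := by
      rw [sum_add_distrib, sum_filter, hQT]

section Flip

variable {ι : Type*} [DecidableEq ι]

def flipOn (S : Finset ι) (b : ι → Bool) : ι → Bool := fun i => if i ∈ S then !b i else b i

lemma flipOn_involutive (S : Finset ι) : Function.Involutive (flipOn S) := fun b => by
  funext i
  by_cases hi : i ∈ S <;> simp [flipOn, hi]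

lemma card_filter_flipOn (S : Finset ι) (b : ι → Bool) :
    #{i ∈ S | flipOn S b i = true} = #S - #{i ∈ S | b i = true} := by
  have hflip : {i ∈ S | flipOn S b i = true} = {i ∈ S | ¬b i = true} :=
    filter_congr fun i hi => by simp [flipOn, hi]
  rw [hflip, ← card_filter_add_card_filter_not (s := S) (fun i => b i = true)]
  omega

variable [Fintype ι]

lemma bernWeight_le_bernWeight_flipOn {p : ℝ} (hp0 : 0 ≤ p) (hp : p ≤ 1 - p) (S : Finset ι)
    (b : ι → Bool) (h : #S ≤ 2 * #{i ∈ S | b i = true}) :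
    bernWeight p b ≤ bernWeight p (flipOn S b) := by
  have hout : ∏ i ∈ Sᶜ, (if flipOn S b i then p else 1 - p)
      = ∏ i ∈ Sᶜ, (if b i then p else 1 - p) :=
    prod_congr rfl fun i hi => by simp [flipOn, mem_compl.1 hi]
  have hk : #{i ∈ S | b i = true} ≤ #S := card_filter_le _ _
  rw [bernWeight, bernWeight, ← prod_mul_prod_compl S, ← prod_mul_prod_compl S, hout,
    prod_ite_eq_pow_mul_pow p S b, prod_ite_eq_pow_mul_pow p S (flipOn S b), card_filter_flipOn,
    Nat.sub_sub_self hk]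
  exact mul_le_mul_of_nonneg_right (pow_mul_pow_le_pow_mul_pow hp0 hp (by omega))
    (prod_nonneg fun i _ => by split <;> linarith)

lemma tailWeight_mul_bernWeight_add_le_min {p : ℝ} (hp0 : 0 ≤ p) (hp : p ≤ 1 - p)
    (S : Finset ι) (b : ι → Bool) :
    tailWeight #S #{i ∈ S | b i = true} * bernWeight p b
        + tailWeight #S #{i ∈ S | flipOn S b i = true} * bernWeight p (flipOn S b)
      ≤ min (bernWeight p b) (bernWeight p (flipOn S b)) := by
  have hk : #{i ∈ S | b i = true} ≤ #S := card_filter_le _ _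
  rw [card_filter_flipOn]
  refine tailWeight_mul_add_tailWeight_mul_le_min hk
    (bernWeight_le_bernWeight_flipOn hp0 hp S b) fun h => ?_
  have hflip := bernWeight_le_bernWeight_flipOn hp0 hp S (flipOn S b)
    (by rw [card_filter_flipOn]; omega)
  rwa [flipOn_involutive S b] at hflip

lemma xor_flipOn_filter_ne (x y b : ι → Bool) :
    (fun i => xor (y i) (flipOn {i | x i ≠ y i} b i)) = fun i => xor (x i) (b i) := by
  funext i
  simp only [flipOn, mem_filter, mem_univ, true_and]
  cases x i <;> cases y i <;> simp

end Flip

theorem failure_prob_lower_bound_general (m d D : ℕ) (p : ℝ) (hp0 : 0 < p) (hp : p < 1 / 2)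
    (Cenc : ℕ → Fin d → Bool) (Cdec : (Fin d → Bool) → ℕ)
    (hD2 : ∃ u, u < m ∧ ∃ v, v < m ∧ u ≠ v ∧ hammingDist (Cenc u) (Cenc v) = D) :
    ∃ v, v < m ∧
      (∑ c ∈ Finset.univ.filter (fun c : Fin D → Bool =>
          D < 2 * (Finset.univ.filter fun i => c i = true).card),
        ∏ i, (if c i then p else 1 - p))
      + (1 / 2) * (∑ c ∈ Finset.univ.filter (fun c : Fin D → Bool =>
          2 * (Finset.univ.filter fun i => c i = true).card = D),
        ∏ i, (if c i then p else 1 - p))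
      ≤ ∑ b ∈ Finset.univ.filter (fun b : Fin d → Bool =>
          Cdec (fun i => xor (Cenc v i) (b i)) ≠ v),
        ∏ i, (if b i then p else 1 - p) := by
  obtain ⟨u, hu, v, hv, huv, hdist⟩ := hD2
  set S : Finset (Fin d) := {i | Cenc u i ≠ Cenc v i}
  have hS : #S = D := hdist
  subst hS
  have hfail : ∀ b, Cdec (fun i => xor (Cenc u i) (b i)) ≠ u
      ∨ Cdec (fun i => xor (Cenc v i) (flipOn S b i)) ≠ v := fun b => by
    rw [xor_flipOn_filter_ne, ← not_and_or]
    exact fun h => huv (h.1.symm.trans h.2)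
  have hp1 : p ≤ 1 - p := by linarith
  have hsum := two_mul_sum_le_sum_filter_add_sum_filter (flipOn_involutive S)
    (bernWeight_nonneg hp0.le (by linarith)) (fun b => Cdec (fun i => xor (Cenc u i) (b i)) ≠ u)
    (fun b => Cdec (fun i => xor (Cenc v i) (b i)) ≠ v) hfail
    (tailWeight_mul_bernWeight_add_le_min hp0.le hp1 S)
  simp only [← bernWeight.eq_1]
  rw [sum_filter_add_half_sum_filter_eq, ← sum_card_filter_mul_bernWeight]
  by_contra! hsmall
  linarith [hsmall u hu, hsmall v hv]

/-- Lower bound on the failure probability of a code with minimum distance `D` under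
`Bern(p)^d` noise: `P_p(C) ≥ Pr[‖c_p‖₁ > D/2] + ½·Pr[‖c_p‖₁ = D/2]`
where `c_p ~ Bern(p)^D`. -/
theorem failure_prob_lower_bound (m d D : ℕ) (p : ℝ) (hp0 : 0 < p) (hp : p < 1 / 2)
    (Cenc : ℕ → Fin d → Bool) (Cdec : (Fin d → Bool) → ℕ)
    (hcode : ∀ v < m, Cdec (Cenc v) = v)
    (hD1 : ∀ u < m, ∀ v < m, u ≠ v → D ≤ hammingDist (Cenc u) (Cenc v))
    (hD2 : ∃ u, u < m ∧ ∃ v, v < m ∧ u ≠ v ∧ hammingDist (Cenc u) (Cenc v) = D) :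
    ∃ v, v < m ∧
      (∑ c ∈ Finset.univ.filter (fun c : Fin D → Bool =>
          D < 2 * (Finset.univ.filter fun i => c i = true).card),
        ∏ i, (if c i then p else 1 - p))
      + (1 / 2) * (∑ c ∈ Finset.univ.filter (fun c : Fin D → Bool =>
          2 * (Finset.univ.filter fun i => c i = true).card = D),
        ∏ i, (if c i then p else 1 - p))
      ≤ ∑ b ∈ Finset.univ.filter (fun b : Fin d → Bool =>
          Cdec (fun i => xor (Cenc v i) (b i)) ≠ v),
        ∏ i, (if b i then p else 1 - p) :=
  failure_prob_lower_bound_general m d D p hp0 hp Cenc Cdec hD2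
end

section
/- Let K_enc(v) = C_enc(v) L_enc(v) C_enc(v) L_enc(v) be the four-fold concatenation construction from an injective code C_enc with minimum distance D, with L_enc the complement code. Let G_enc be the Gray code derived from K_enc by flipping the g = 2(d + D) differing bits one at a time. Then for all v, v' in the domain with |v - v'| < D, the Hamming distance between G_enc(v) and G_enc(v') equals |v - v'|. -/
/-!
Passing from `G_enc u` to `G_enc (u + 1)` flips exactly one bit, namely the `(u % g)`-th
position (in increasing order) where `K_enc (u / g)` and `K_enc (u / g + 1)` differ; this uses
that consecutive `K_enc` codewords differ in exactly `g = 2(d + D)` bits. A run of `n` flips at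
pairwise distinct positions moves Hamming distance exactly `n`. Within one block the positions
are distinct because the enumeration `b q` is injective. Across a block boundary, a strictly
increasing `b : Fin g → Fin N` satisfies `i ≤ b i ≤ i + (N - g)`; the last flips of block `q`
have large index, the first flips of block `q + 1` small index, and with `N - g = 2d` the two
ranges of positions are disjoint as long as fewer than `D` flips are involved.
-/

open Finset Function

theorem hammingDist_append {β : Type*} [DecidableEq β] {a c : ℕ} (x x' : Fin a → β)
    (y y' : Fin c → β) :
    hammingDist (Fin.append x y) (Fin.append x' y') = hammingDist x x' + hammingDist y y' := by
  simp only [hammingDist, card_filter, Fin.sum_univ_add, Fin.append_left, Fin.append_right]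

theorem hammingDist_not_add_hammingDist {ι : Type*} [Fintype ι] (x y : ι → Bool) :
    hammingDist x (fun i => !y i) + hammingDist x y = Fintype.card ι := by
  rw [add_comm, hammingDist, hammingDist, ← card_univ,
    ← card_filter_add_card_filter_not (s := univ) (p := fun i => x i ≠ y i)]
  congr 2
  ext i
  cases x i <;> cases y i <;> simp

theorem hammingDist_append_append_not {d D : ℕ} (x y : Fin d → Bool) :
    hammingDist (Fin.append x (Fin.append x fun _ : Fin D => false))
      (Fin.append y (Fin.append (fun i => !y i) fun _ => true)) = d + D := by
  have := hammingDist_not_add_hammingDist x y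
  simp only [Fintype.card_fin] at this
  have hconst : hammingDist (fun _ : Fin D => false) (fun _ => true) = D := by
    simp [hammingDist]
  rw [hammingDist_append, hammingDist_append, hconst]
  omega

theorem mem_range_of_hammingDist_eq {ι α : Type*} [Fintype ι] [DecidableEq ι] [DecidableEq α]
    {n : ℕ} {x y : ι → α} {b : Fin n → ι} (hb : Injective b) (hxy : ∀ i, x (b i) ≠ y (b i))
    (hdist : hammingDist x y = n) (j : ι) (hj : x j ≠ y j) : j ∈ Set.range b := by
  have himage : univ.image b = ({j | x j ≠ y j} : Finset ι) :=
    eq_of_subset_of_card_le (fun j hj => by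
      obtain ⟨i, -, rfl⟩ := mem_image.mp hj
      simpa using hxy i)
      (by rw [card_image_of_injective _ hb, ← hammingDist, hdist, card_univ, Fintype.card_fin])
  simpa using (Finset.ext_iff.mp himage j).mpr (by simpa using hj)

theorem hammingDist_eq_of_flips {ι α : Type*} [Fintype ι] [DecidableEq ι] [DecidableEq α]
    (x : ℕ → ι → α) (p : ℕ → ι) (n : ℕ)
    (hstep : ∀ k < n, ∀ j, x (k + 1) j ≠ x k j ↔ j = p k) (hp : Set.InjOn p (Set.Iio n)) :
    hammingDist (x 0) (x n) = n := by
  suffices h : ∀ j, x 0 j ≠ x n j ↔ ∃ k < n, p k = j by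
    have : ({j | x 0 j ≠ x n j} : Finset ι) = (range n).image p := by ext j; simp [h]
    rw [hammingDist, this, card_image_of_injOn (by simpa using hp), card_range]
  induction n with
  | zero => simp
  | succ n ih =>
    intro j
    have ih := ih (fun k hk => hstep k (by omega)) (hp.mono fun k hk => by simp_all; omega) j
    by_cases hj : j = p n
    · subst hj
      refine iff_of_true ?_ ⟨n, by omega, rfl⟩
      have hfresh : x n (p n) = x 0 (p n) := by
        by_contra hne
        obtain ⟨k, hk, hkn⟩ := ih.mp (Ne.symm hne)
        exact absurd (hp (by simp; omega) (by simp) hkn) (by omega)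
      rw [← hfresh]
      exact Ne.symm ((hstep n (by omega) _).mpr rfl)
    · have hkeep : x (n + 1) j = x n j := not_not.mp fun h => hj ((hstep n (by omega) j).mp h)
      rw [hkeep, ih]
      refine ⟨fun ⟨k, hk, hkj⟩ => ⟨k, by omega, hkj⟩, fun ⟨k, hk, hkj⟩ => ⟨k, ?_, hkj⟩⟩
      rcases Nat.lt_succ_iff_lt_or_eq.mp hk with hk | rfl
      · exact hk
      · exact absurd hkj.symm hj

theorem Fin.val_le_val_of_strictMono {n N : ℕ} {b : Fin n → Fin N} (hb : StrictMono b)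
    (i : Fin n) : (i : ℕ) ≤ b i := by
  have := card_le_card_of_injOn b (s := Iic i) (t := Iic (b i))
    (fun j hj => by simpa using hb.monotone (by simpa using hj)) hb.injective.injOn
  simpa using this

theorem Fin.val_add_le_of_strictMono {n N : ℕ} {b : Fin n → Fin N} (hb : StrictMono b)
    (i : Fin n) : (b i : ℕ) + n ≤ N + i := by
  have := card_le_card_of_injOn b (s := Ici i) (t := Ici (b i))
    (fun j hj => by simpa using hb.monotone (by simpa using hj)) hb.injective.injOn
  simp only [Fin.card_Ici] at this
  omega

theorem Fin.apply_ne_of_strictMono {n N : ℕ} {b b' : Fin n → Fin N} (hb : StrictMono b)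
    (hb' : StrictMono b') {i i' : Fin n} (h : (i' : ℕ) + N < i + n) : b i ≠ b' i' := by
  intro heq
  have hlow := Fin.val_le_val_of_strictMono hb i
  have hhigh := Fin.val_add_le_of_strictMono hb' i'
  rw [heq] at hlow
  omega

section PrefixMerge

variable {ι α : Type*} [DecidableEq ι] {n : ℕ}

def prefixMerge (x y : ι → α) (b : Fin n → ι) (r : ℕ) : ι → α :=
  fun j => if ∃ i : Fin n, (i : ℕ) < r ∧ b i = j then y j else x j

theorem prefixMerge_zero (x y : ι → α) (b : Fin n → ι) : prefixMerge x y b 0 = x := by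
  funext j
  simp [prefixMerge]

theorem prefixMerge_eq_right (x y : ι → α) (b : Fin n → ι)
    (hb : ∀ j, x j ≠ y j → j ∈ Set.range b) : prefixMerge x y b n = y := by
  funext j
  by_cases hj : x j = y j
  · simp [prefixMerge, hj]
  · obtain ⟨i, rfl⟩ := hb j hj
    exact if_pos ⟨i, i.isLt, rfl⟩

theorem prefixMerge_succ_ne_iff (x y : ι → α) {b : Fin n → ι} (hb : Injective b)
    (hxy : ∀ i, x (b i) ≠ y (b i)) (r : Fin n) (j : ι) :
    prefixMerge x y b (r + 1) j ≠ prefixMerge x y b r j ↔ j = b r := by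
  by_cases hj : j = b r
  · subst hj
    have hnew : ¬ ∃ i : Fin n, (i : ℕ) < r ∧ b i = b r := fun ⟨i, hi, hir⟩ =>
      (hb hir ▸ hi).false
    have hold : ∃ i : Fin n, (i : ℕ) < r + 1 ∧ b i = b r := ⟨r, Nat.lt_succ_self _, rfl⟩
    simp only [prefixMerge, if_pos hold, if_neg hnew]
    exact iff_of_true (hxy r).symm trivial
  · have hsame : (∃ i : Fin n, (i : ℕ) < r + 1 ∧ b i = j) ↔ ∃ i : Fin n, (i : ℕ) < r ∧ b i = j :=
      exists_congr fun i => and_congr_left fun hij => by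
        have : i ≠ r := by rintro rfl; exact hj hij.symm
        have : (i : ℕ) ≠ r := Fin.val_ne_of_ne this
        omega
    simp only [prefixMerge, hsame, ne_eq, not_true_eq_false, hj]

end PrefixMerge

def grayFlipPos {ι : Type*} {g : ℕ} (hg : 0 < g) (b : ℕ → Fin g → ι) (u : ℕ) : ι :=
  b (u / g) ⟨u % g, Nat.mod_lt u hg⟩

theorem grayFlipPos_mul_add {ι : Type*} {g : ℕ} (hg : 0 < g) (b : ℕ → Fin g → ι) (q : ℕ)
    {r : ℕ} (hr : r < g) : grayFlipPos hg b (q * g + r) = b q ⟨r, hr⟩ := by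
  have hdiv : (q * g + r) / g = q := by
    rw [add_comm, Nat.add_mul_div_right _ _ hg, Nat.div_eq_of_lt hr, zero_add]
  simp only [grayFlipPos, hdiv, Nat.mul_add_mod_self_right, Nat.mod_eq_of_lt hr]

theorem gray_ne_succ_iff {ι α : Type*} [Fintype ι] [DecidableEq ι] [DecidableEq α] {g m : ℕ}
    (hg : 0 < g) (K G : ℕ → ι → α) (b : ℕ → Fin g → ι)
    (hb : ∀ q, q + 1 < m → Injective (b q))
    (hdiff : ∀ q, q + 1 < m → ∀ i, K q (b q i) ≠ K (q + 1) (b q i))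
    (hcard : ∀ q, hammingDist (K q) (K (q + 1)) = g)
    (hG : ∀ q r, r < g → q * g + r ≤ (m - 1) * g →
      G (q * g + r) = prefixMerge (K q) (K (q + 1)) (b q) r)
    {u : ℕ} (hu : u < (m - 1) * g) (j : ι) :
    G (u + 1) j ≠ G u j ↔ j = grayFlipPos hg b u := by
  obtain ⟨q, r, hr, rfl⟩ : ∃ q r, r < g ∧ u = q * g + r :=
    ⟨u / g, u % g, Nat.mod_lt u hg, (Nat.div_add_mod' u g).symm⟩
  have hq : q + 1 < m := by
    have : q < m - 1 := Nat.lt_of_mul_lt_mul_right (a := g) (by omega)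
    omega
  have hnext : G (q * g + r + 1) = prefixMerge (K q) (K (q + 1)) (b q) (r + 1) := by
    rcases (Nat.succ_le_of_lt hr).lt_or_eq with hlt | heq
    · rw [add_assoc]
      exact hG q (r + 1) hlt (by omega)
    · replace heq : r + 1 = g := heq
      have hfull : q * g + r + 1 = (q + 1) * g + 0 := by rw [add_mul]; omega
      have hle : (q + 1) * g ≤ (m - 1) * g := Nat.mul_le_mul_right g (by omega)
      rw [hfull, hG (q + 1) 0 hg (by omega), prefixMerge_zero, heq,
        prefixMerge_eq_right _ _ _ (mem_range_of_hammingDist_eq (hb q hq) (hdiff q hq) (hcard q))]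
  rw [hnext, hG q r hr (by omega), grayFlipPos_mul_add hg b q hr]
  exact prefixMerge_succ_ne_iff _ _ (hb q hq) (hdiff q hq) ⟨r, hr⟩ j

theorem grayFlipPos_injOn {g N : ℕ} (hg : 0 < g) (b : ℕ → Fin g → Fin N) (w n : ℕ)
    (hb : ∀ k < n, StrictMono (b ((w + k) / g))) (hn : n + N ≤ 2 * g) :
    Set.InjOn (fun k => grayFlipPos hg b (w + k)) (Set.Iio n) := by
  suffices h : ∀ k₁ k₂, k₁ < k₂ → k₂ < n → grayFlipPos hg b (w + k₁) ≠ grayFlipPos hg b (w + k₂) by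
    intro k₁ hk₁ k₂ hk₂ heq
    rcases lt_trichotomy k₁ k₂ with hlt | heq' | hgt
    · exact absurd heq (h k₁ k₂ hlt hk₂)
    · exact heq'
    · exact absurd heq.symm (h k₂ k₁ hgt hk₁)
  intro k₁ k₂ hlt hk₂ heq
  have hu₁ := Nat.div_add_mod' (w + k₁) g
  have hu₂ := Nat.div_add_mod' (w + k₂) g
  rcases (Nat.div_le_div_right (c := g) (by omega : w + k₁ ≤ w + k₂)).lt_or_eq with hq | hq
  · have hblock : (w + k₁) / g * g + g ≤ (w + k₂) / g * g := by
      rw [← Nat.succ_mul]; exact Nat.mul_le_mul_right g hq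
    have hpos : (w + k₂) % g + N < (w + k₁) % g + g := by omega
    exact Fin.apply_ne_of_strictMono (hb k₁ (by omega)) (hb k₂ hk₂) hpos heq
  · simp only [grayFlipPos, ← hq] at heq
    have := Fin.mk.inj_iff.mp ((hb k₁ (by omega)).injective heq)
    rw [hq] at hu₁
    omega

theorem hammingDist_codeword_succ {d D : ℕ} (C : ℕ → Fin d → Bool) (L : ℕ → Fin (d + D) → Bool)
    (hL : ∀ v, L v = if Even v then Fin.append (C v) (fun _ => false)
        else Fin.append (fun i => !(C v i)) (fun _ => true)) (q : ℕ) :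
    hammingDist (Fin.append (C q) (L q)) (Fin.append (C (q + 1)) (L (q + 1))) = d + D := by
  rcases Nat.even_or_odd q with hq | hq
  · rw [hL q, hL (q + 1), if_pos hq, if_neg (Nat.not_even_iff_odd.mpr hq.add_one)]
    exact hammingDist_append_append_not _ _
  · rw [hL q, hL (q + 1), if_neg (Nat.not_even_iff_odd.mpr hq), if_pos hq.add_one,
      hammingDist_comm]
    exact hammingDist_append_append_not _ _

theorem gray_code_small_dist_general (m d D : ℕ)
    (Cenc : ℕ → Fin d → Bool)
    (Lenc : ℕ → Fin (d + D) → Bool)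
    (hL : ∀ v, Lenc v = if Even v then Fin.append (Cenc v) (fun _ => false)
        else Fin.append (fun i => !(Cenc v i)) (fun _ => true))
    (Kenc : ℕ → Fin (d + (d + D) + (d + (d + D))) → Bool)
    (hK : ∀ v, Kenc v =
      Fin.append (Fin.append (Cenc v) (Lenc v)) (Fin.append (Cenc v) (Lenc v)))
    (b : ℕ → Fin (2 * (d + D)) → Fin (d + (d + D) + (d + (d + D))))
    (hmono : ∀ q, q + 1 < m → StrictMono (b q))
    (hdiffb : ∀ q, q + 1 < m → ∀ i, Kenc q (b q i) ≠ Kenc (q + 1) (b q i))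
    (Genc : ℕ → Fin (d + (d + D) + (d + (d + D))) → Bool)
    (hG : ∀ q r, r < 2 * (d + D) → q * (2 * (d + D)) + r ≤ (m - 1) * (2 * (d + D)) →
      ∀ j, Genc (q * (2 * (d + D)) + r) j =
        if ∃ i : Fin (2 * (d + D)), (i : ℕ) < r ∧ b q i = j then Kenc (q + 1) j else Kenc q j)
    (v v' : ℕ) (hv : v ≤ (m - 1) * (2 * (d + D))) (hv' : v' ≤ (m - 1) * (2 * (d + D)))
    (hclose : Nat.dist v v' < D) :
    hammingDist (Genc v) (Genc v') = Nat.dist v v' := by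
  wlog hle : v ≤ v' generalizing v v'
  · rw [hammingDist_comm, Nat.dist_comm]
    exact this v' v hv' hv (Nat.dist_comm v v' ▸ hclose) (by omega)
  obtain ⟨n, rfl⟩ := Nat.exists_eq_add_of_le hle
  rw [Nat.dist_eq_sub_of_le hle, Nat.add_sub_cancel_left] at hclose ⊢
  have hg : 0 < 2 * (d + D) := by omega
  have hcard : ∀ q, hammingDist (Kenc q) (Kenc (q + 1)) = 2 * (d + D) := fun q => by
    rw [hK, hK, hammingDist_append, hammingDist_codeword_succ Cenc Lenc hL]
    ring
  have hblock : ∀ k < n, (v + k) / (2 * (d + D)) + 1 < m := fun k hk => by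
    have : (v + k) / (2 * (d + D)) < m - 1 := (Nat.div_lt_iff_lt_mul hg).mpr (by omega)
    exact Nat.add_lt_of_lt_sub this
  have hflips := hammingDist_eq_of_flips (fun k => Genc (v + k))
    (fun k => grayFlipPos hg b (v + k)) n
    (fun k hk j => gray_ne_succ_iff hg Kenc Genc b (fun q hq => (hmono q hq).injective) hdiffb
      hcard (fun q r hr hqr => funext (hG q r hr hqr)) (u := v + k) (by omega) j)
    (grayFlipPos_injOn hg b v n (fun k hk => hmono _ (hblock k hk)) (by omega))
  simpa using hflips

/-- For the error-correcting Gray code `Genc` built from an injective code `Cenc` of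
minimum distance `D` via the four-fold concatenation construction, values at distance
less than `D` have encodings at Hamming distance exactly `|v - v'|`. -/
theorem gray_code_small_dist (m d D : ℕ)
    (Cenc : ℕ → Fin d → Bool)
    (hinj : ∀ u < m, ∀ v < m, Cenc u = Cenc v → u = v)
    (hdist : ∀ u < m, ∀ v < m, u ≠ v → D ≤ hammingDist (Cenc u) (Cenc v))
    (Lenc : ℕ → Fin (d + D) → Bool)
    (hL : ∀ v, Lenc v = if Even v then Fin.append (Cenc v) (fun _ => false)
        else Fin.append (fun i => !(Cenc v i)) (fun _ => true))
    (Kenc : ℕ → Fin (d + (d + D) + (d + (d + D))) → Bool)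
    (hK : ∀ v, Kenc v =
      Fin.append (Fin.append (Cenc v) (Lenc v)) (Fin.append (Cenc v) (Lenc v)))
    (b : ℕ → Fin (2 * (d + D)) → Fin (d + (d + D) + (d + (d + D))))
    (hmono : ∀ q, q + 1 < m → StrictMono (b q))
    (hdiffb : ∀ q, q + 1 < m → ∀ i, Kenc q (b q i) ≠ Kenc (q + 1) (b q i))
    (Genc : ℕ → Fin (d + (d + D) + (d + (d + D))) → Bool)
    (hG : ∀ q r, r < 2 * (d + D) → q * (2 * (d + D)) + r ≤ (m - 1) * (2 * (d + D)) →
      ∀ j, Genc (q * (2 * (d + D)) + r) j =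
        if ∃ i : Fin (2 * (d + D)), (i : ℕ) < r ∧ b q i = j then Kenc (q + 1) j else Kenc q j)
    (v v' : ℕ) (hv : v ≤ (m - 1) * (2 * (d + D))) (hv' : v' ≤ (m - 1) * (2 * (d + D)))
    (hclose : Nat.dist v v' < D) :
    hammingDist (Genc v) (Genc v') = Nat.dist v v' :=
  gray_code_small_dist_general m d D Cenc Lenc hL Kenc hK b hmono hdiffb Genc hG v v' hv hv' hclose
end

section
/- Let G_enc be the error-correcting Gray code built (via Construction of the paper) from an injective code C_enc with minimum distance D(C). Then for all v, v' in the domain with |v - v'| ≥ D(C), the Hamming distance between G_enc(v) and G_enc(v') is at least D(C). -/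
/-!
Consecutive words `K q`, `K (q + 1)` differ in exactly `g = 2 (d + D)` positions: in each
`C`-block they differ where the codewords do, and the parity padding makes the two `L`-blocks
differ exactly where the codewords agree, plus on all `D` padding bits. Writing `v = q g + r` with
`0 ≤ r ≤ g`, the word `G v` flips the first `r` of these positions, so it agrees with `K (q + 1)`
before some cut position and with `K q` after it.

For two values in the same run, the flips `r ≤ i < r'` already give `r' - r ≥ D` differences.
Otherwise each word is cut inside at most one of the four blocks `C, L, C, L`, so some block is cut
in neither word, and there the two words carry `C`- or `L`-codewords of two different values —
unless `v' = (q + 1) g + r'` is cut before `v`, in which case the last `g - r` flips of `v` and the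
first `r'` flips of `v'` lie in disjoint positions and give `g - r + r' = v' - v` differences.
-/

open Finset Function

namespace GrayCode

section Hamming

variable {β : Type*} [DecidableEq β]

theorem card_le_hammingDist {ι : Type*} [Fintype ι] {x y : ι → β} {S : Finset ι}
    (h : ∀ j ∈ S, x j ≠ y j) : #S ≤ hammingDist x y :=
  card_le_card fun j hj => mem_filter.2 ⟨mem_univ j, h j hj⟩

theorem hammingDist_comp_le {ι κ : Type*} [Fintype ι] [Fintype κ] {e : κ → ι}
    (he : Injective e) (x y : ι → β) : hammingDist (x ∘ e) (y ∘ e) ≤ hammingDist x y :=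
  card_le_card_of_injOn e (fun i hi => by simpa using hi) he.injOn

theorem hammingDist_append {p l : ℕ} (a a' : Fin p → β) (c c' : Fin l → β) :
    hammingDist (Fin.append a c) (Fin.append a' c') = hammingDist a a' + hammingDist c c' := by
  simp only [hammingDist, card_filter, Fin.sum_univ_add, Fin.append_left, Fin.append_right]

theorem hammingDist_const {ι : Type*} [Fintype ι] {a a' : β} (h : a ≠ a') :
    hammingDist (fun _ : ι => a) (fun _ => a') = Fintype.card ι := by
  simp [hammingDist, h, card_univ]

end Hamming

theorem hammingDist_not_right {p : ℕ} (a c : Fin p → Bool) :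
    hammingDist a (fun i => !c i) = p - hammingDist a c := by
  suffices hammingDist a (fun i => !c i) + hammingDist a c = p by omega
  have hj (j : Fin p) : ((if a j ≠ !c j then 1 else 0) + if a j ≠ c j then 1 else 0) = 1 := by
    cases a j <;> cases c j <;> rfl
  simp only [hammingDist, card_filter, ← sum_add_distrib, hj, sum_const, card_univ,
    Fintype.card_fin, smul_eq_mul, mul_one]

theorem hammingDist_not_left {p : ℕ} (a c : Fin p → Bool) :
    hammingDist (fun i => !a i) c = p - hammingDist a c := by
  rw [hammingDist_comm, hammingDist_not_right, hammingDist_comm]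

/-- The paper's `L_enc`: the codeword, complemented when `u` is odd, followed by `D` parity bits. -/
def parityPad {d : ℕ} (D u : ℕ) (c : Fin d → Bool) : Fin (d + D) → Bool :=
  if Even u then Fin.append c (fun _ => false) else Fin.append (fun i => !c i) (fun _ => true)

theorem hammingDist_parityPad {d : ℕ} (D u u' : ℕ) (c c' : Fin d → Bool) :
    hammingDist (parityPad D u c) (parityPad D u' c') =
      if (Even u ↔ Even u') then hammingDist c c' else d - hammingDist c c' + D := by
  have hnot := hammingDist_comp (fun _ => not) (x := c) (y := c') fun _ => Bool.not_injective
  by_cases hu : Even u <;> by_cases hu' : Even u' <;>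
    simp only [parityPad, hu, hu', if_true, if_false, hammingDist_append, hammingDist_not_right,
      hammingDist_not_left, hammingDist_const Bool.false_ne_true,
      hammingDist_const Bool.false_ne_true.symm, Fintype.card_fin, hammingDist_self, hnot,
      iff_true, iff_false, not_true, add_zero]

def HasMinDist {p : ℕ} (m D : ℕ) (c : ℕ → Fin p → Bool) : Prop :=
  ∀ u < m, ∀ u' < m, u ≠ u' → D ≤ hammingDist (c u) (c u')

theorem HasMinDist.length_pos {p m D : ℕ} {c : ℕ → Fin p → Bool} (hc : HasMinDist m D c)
    (hm : 2 ≤ m) (hD : 0 < D) : 0 < p := by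
  have := (hc 0 (by omega) 1 hm zero_ne_one).trans hammingDist_le_card_fintype
  rw [Fintype.card_fin] at this
  omega

theorem HasMinDist.parityPad {d m D : ℕ} {c : ℕ → Fin d → Bool} (hc : HasMinDist m D c) :
    HasMinDist m D fun u => parityPad D u (c u) := by
  intro u hu u' hu' huu'
  rw [hammingDist_parityPad]
  split_ifs
  · exact hc u hu u' hu' huu'
  · omega

theorem hammingDist_parityPad_succ {d : ℕ} (D u : ℕ) (c c' : Fin d → Bool) :
    hammingDist (parityPad D u c) (parityPad D (u + 1) c') = d - hammingDist c c' + D := by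
  rw [hammingDist_parityPad, if_neg (by rw [Nat.even_add_one]; exact iff_not_self)]

theorem hammingDist_layout_parityPad_succ {d : ℕ} (D u : ℕ) (c c' : Fin d → Bool) :
    hammingDist (Fin.append (Fin.append c (parityPad D u c)) (Fin.append c (parityPad D u c)))
      (Fin.append (Fin.append c' (parityPad D (u + 1) c'))
        (Fin.append c' (parityPad D (u + 1) c'))) = 2 * (d + D) := by
  have := hammingDist_le_card_fintype (x := c) (y := c')
  rw [Fintype.card_fin] at this
  rw [hammingDist_append, hammingDist_append, hammingDist_parityPad_succ]
  omega

section Flips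

variable {β : Type*} {n g : ℕ}

def flipPrefix (x y : Fin n → β) (b : Fin g → Fin n) (r : ℕ) : Fin n → β :=
  fun j => if ∃ i : Fin g, (i : ℕ) < r ∧ b i = j then y j else x j

def splice (y x : Fin n → β) (s : ℕ) : Fin n → β :=
  fun j => if (j : ℕ) < s then y j else x j

def flips (b : Fin g → Fin n) (r r' : ℕ) : Finset (Fin n) :=
  (univ.filter fun i : Fin g => r ≤ (i : ℕ) ∧ (i : ℕ) < r').image b

theorem mem_flips {b : Fin g → Fin n} {r r' : ℕ} {j : Fin n} :
    j ∈ flips b r r' ↔ ∃ i : Fin g, r ≤ (i : ℕ) ∧ (i : ℕ) < r' ∧ b i = j := by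
  simp [flips, and_assoc]

theorem card_flips {b : Fin g → Fin n} (hb : Injective b) {r r' : ℕ} (hr' : r' ≤ g) :
    #(flips b r r') = r' - r := by
  have hval : (univ.filter fun i : Fin g => r ≤ (i : ℕ) ∧ (i : ℕ) < r').map Fin.valEmbedding =
      Ico r r' := by
    ext k
    simp only [mem_map, mem_filter, mem_univ, true_and, Fin.valEmbedding_apply, Fin.exists_iff,
      exists_and_left, exists_prop, exists_eq_right_right, mem_Ico, and_iff_left_iff_imp, and_imp]
    omega
  rw [flips, card_image_of_injective _ hb, ← card_map Fin.valEmbedding, hval, Nat.card_Ico]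

theorem exists_cut {b : Fin g → Fin n} (hb : StrictMono b) {r : ℕ} (hr : r ≤ g) :
    ∃ s : ℕ, ∀ i, (b i : ℕ) < s ↔ (i : ℕ) < r := by
  rcases hr.lt_or_eq with hr | rfl
  · exact ⟨b ⟨r, hr⟩, fun i => by rw [Fin.val_fin_lt, hb.lt_iff_lt, Fin.lt_def]⟩
  · exact ⟨n, fun i => iff_of_true (b i).isLt i.isLt⟩

theorem flipPrefix_eq_splice {x y : Fin n → β} {b : Fin g → Fin n}
    (hcover : ∀ j, x j ≠ y j → ∃ i, b i = j) {r s : ℕ} (hs : ∀ i, (b i : ℕ) < s ↔ (i : ℕ) < r) :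
    flipPrefix x y b r = splice y x s := by
  funext j
  unfold flipPrefix splice
  by_cases hj : (j : ℕ) < s
  · rw [if_pos hj, ite_eq_left_iff]
    intro hno
    by_contra hxy
    obtain ⟨i, rfl⟩ := hcover j hxy
    exact hno ⟨i, (hs i).1 hj, rfl⟩
  · rw [if_neg hj, if_neg]
    rintro ⟨i, hi, rfl⟩
    exact hj ((hs i).2 hi)

theorem splice_of_le {y x : Fin n → β} {s : ℕ} (hs : n ≤ s) : splice y x s = y :=
  funext fun j => if_pos (j.isLt.trans_le hs)

theorem flipPrefix_zero (x y : Fin n → β) (b : Fin g → Fin n) : flipPrefix x y b 0 = x :=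
  funext fun j => if_neg (by simp)

theorem splice_comp_eq {p : ℕ} {K : ℕ → Fin n → β} {c : ℕ → Fin p → β} {e : Fin p → Fin n}
    (hKe : ∀ u i, K u (e i) = c u i) {lo hi : ℕ} (hlo : ∀ i, lo ≤ (e i : ℕ))
    (hhi : ∀ i, (e i : ℕ) < hi) (q : ℕ) {s : ℕ} (hs : s ≤ lo ∨ hi ≤ s) :
    splice (K (q + 1)) (K q) s ∘ e = c (if hi ≤ s then q + 1 else q) := by
  funext i
  have hloi := hlo i
  have hhii := hhi i
  by_cases h : hi ≤ s
  · simp only [comp_apply, splice, if_pos h, if_pos (hhii.trans_le h), hKe]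
  · have hsi : ¬ (e i : ℕ) < s := by omega
    simp only [comp_apply, splice, if_neg h, if_neg hsi, hKe]

theorem exists_splice_eq {m : ℕ} {K : ℕ → Fin n → β} {b : ℕ → Fin g → Fin n}
    {G : ℕ → Fin n → β} (hg : 0 < g) (hmono : ∀ q, q + 1 < m → StrictMono (b q))
    (hcover : ∀ q, q + 1 < m → ∀ j, K q j ≠ K (q + 1) j → ∃ i, b q i = j)
    (hG : ∀ q r, r < g → q * g + r ≤ (m - 1) * g →
      G (q * g + r) = flipPrefix (K q) (K (q + 1)) (b q) r)
    (hm : 2 ≤ m) {w : ℕ} (hw : w ≤ (m - 1) * g) :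
    ∃ q r s, q + 1 < m ∧ r ≤ g ∧ w = q * g + r ∧ (∀ i, (b q i : ℕ) < s ↔ (i : ℕ) < r) ∧
      G w = splice (K (q + 1)) (K q) s := by
  rcases hw.lt_or_eq with hw | rfl
  · obtain ⟨q, r, hr, rfl⟩ : ∃ q r, r < g ∧ w = q * g + r :=
      ⟨w / g, w % g, Nat.mod_lt w hg, (Nat.div_add_mod' w g).symm⟩
    have hq : q + 1 < m := by
      have := Nat.lt_of_mul_lt_mul_right (a := g) (lt_of_le_of_lt (Nat.le_add_right _ r) hw)
      omega
    obtain ⟨s, hs⟩ := exists_cut (hmono q hq) hr.le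
    refine ⟨q, r, s, hq, hr.le, rfl, hs, ?_⟩
    rw [hG q r hr hw.le, flipPrefix_eq_splice (hcover q hq) hs]
  · -- the endpoint `(m - 1) * g` is the last word of run `m - 2` as well as the first of run `m - 1`
    have hm1 : m - 1 = m - 2 + 1 := by omega
    refine ⟨m - 2, g, n, by omega, le_rfl, by rw [hm1, Nat.succ_mul],
      fun i => iff_of_true (b _ i).isLt i.isLt, ?_⟩
    rw [splice_of_le le_rfl, ← hm1, ← flipPrefix_zero (K (m - 1)) (K (m - 1 + 1)) (b (m - 1)),
      ← hG (m - 1) 0 hg le_rfl, Nat.add_zero]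

variable [DecidableEq β]

theorem exists_apply_eq_of_hammingDist_eq {x y : Fin n → β} {b : Fin g → Fin n}
    (hb : Injective b) (hdiff : ∀ i, x (b i) ≠ y (b i)) (hxy : hammingDist x y = g)
    {j : Fin n} (hj : x j ≠ y j) : ∃ i, b i = j := by
  have himage : univ.image b = univ.filter fun j => x j ≠ y j := by
    refine eq_of_subset_of_card_le (fun j hj => ?_) ?_
    · obtain ⟨i, -, rfl⟩ := mem_image.1 hj
      exact mem_filter.2 ⟨mem_univ _, hdiff i⟩
    · rw [card_image_of_injective _ hb, card_univ, Fintype.card_fin]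
      exact hxy.le
  have hj' : j ∈ univ.image b := himage ▸ mem_filter.2 ⟨mem_univ j, hj⟩
  simpa using hj'

theorem le_hammingDist_splice {x y : Fin n → β} {b : Fin g → Fin n} (hb : Injective b)
    (hdiff : ∀ i, x (b i) ≠ y (b i)) {r r' s s' : ℕ} (hr' : r' ≤ g)
    (hs : ∀ i, (b i : ℕ) < s ↔ (i : ℕ) < r) (hs' : ∀ i, (b i : ℕ) < s' ↔ (i : ℕ) < r') :
    r' - r ≤ hammingDist (splice y x s) (splice y x s') := by
  rw [← card_flips hb hr']
  refine card_le_hammingDist fun j hj => ?_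
  obtain ⟨i, hri, hir', rfl⟩ := mem_flips.1 hj
  simp only [splice, if_neg (mt (hs i).1 (not_lt.2 hri)), if_pos ((hs' i).2 hir')]
  exact hdiff i

theorem le_hammingDist_splice_succ {x y z : Fin n → β} {b c : Fin g → Fin n}
    (hb : Injective b) (hc : Injective c) (hxy : ∀ i, x (b i) ≠ y (b i))
    (hyz : ∀ i, y (c i) ≠ z (c i)) {r r' s s' : ℕ} (hr' : r' ≤ g)
    (hs : ∀ i, (b i : ℕ) < s ↔ (i : ℕ) < r) (hs' : ∀ i, (c i : ℕ) < s' ↔ (i : ℕ) < r')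
    (hss' : s' ≤ s) :
    g - r + r' ≤ hammingDist (splice y x s) (splice z y s') := by
  have hdisj : Disjoint (flips b r g) (flips c 0 r') := by
    refine disjoint_left.2 fun j hj hj' => ?_
    obtain ⟨i, hri, -, rfl⟩ := mem_flips.1 hj
    obtain ⟨i', -, hi'r', hi'⟩ := mem_flips.1 hj'
    have := (hs' i').2 hi'r'
    have := mt (hs i).1 (not_lt.2 hri)
    omega
  rw [show g - r + r' = #(flips b r g) + #(flips c 0 r') by
    rw [card_flips hb le_rfl, card_flips hc hr', Nat.sub_zero], ← card_union_of_disjoint hdisj]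
  refine card_le_hammingDist fun j hj => ?_
  rcases mem_union.1 hj with hj | hj
  · obtain ⟨i, hri, -, rfl⟩ := mem_flips.1 hj
    have hge : ¬ (b i : ℕ) < s := mt (hs i).1 (not_lt.2 hri)
    simp only [splice, if_neg hge, if_neg (fun h : (b i : ℕ) < s' => hge (h.trans_le hss'))]
    exact hxy i
  · obtain ⟨i, -, hir', rfl⟩ := mem_flips.1 hj
    have hlt : (c i : ℕ) < s' := (hs' i).2 hir'
    simp only [splice, if_pos hlt, if_pos (hlt.trans_le hss')]
    exact hyz i

theorem le_hammingDist_splice_of_block {m D p : ℕ} {K : ℕ → Fin n → Bool}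
    {c : ℕ → Fin p → Bool} (hc : HasMinDist m D c) {e : Fin p → Fin n} (he : Injective e)
    (hKe : ∀ u i, K u (e i) = c u i) {lo hi : ℕ} (hlo : ∀ i, lo ≤ (e i : ℕ))
    (hhi : ∀ i, (e i : ℕ) < hi) {q q' s s' : ℕ} (hqq' : q < q')
    (hq' : q' + 1 < m) (hs : s ≤ lo ∨ hi ≤ s) (hs' : s' ≤ lo ∨ hi ≤ s')
    (hadj : q' = q + 1 → s < s') :
    D ≤ hammingDist (splice (K (q + 1)) (K q) s) (splice (K (q' + 1)) (K q') s') := by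
  obtain rfl | hD := Nat.eq_zero_or_pos D
  · exact Nat.zero_le _
  have hp : 0 < p := hc.length_pos (by omega) hD
  have hlohi : lo < hi := (hlo ⟨0, hp⟩).trans_lt (hhi ⟨0, hp⟩)
  calc D ≤ hammingDist (c (if hi ≤ s then q + 1 else q)) (c (if hi ≤ s' then q' + 1 else q')) :=
        hc _ (by split_ifs <;> omega) _ (by split_ifs <;> omega) (by split_ifs <;> omega)
    _ = hammingDist (splice (K (q + 1)) (K q) s ∘ e) (splice (K (q' + 1)) (K q') s' ∘ e) := by
        rw [splice_comp_eq hKe hlo hhi q hs, splice_comp_eq hKe hlo hhi q' hs']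
    _ ≤ _ := hammingDist_comp_le he _ _

theorem le_hammingDist_splice_of_layout {m D d l : ℕ} {C : ℕ → Fin d → Bool}
    {L : ℕ → Fin l → Bool} {K : ℕ → Fin (d + l + (d + l)) → Bool} (hC : HasMinDist m D C)
    (hL : HasMinDist m D L)
    (hK : ∀ u, K u = Fin.append (Fin.append (C u) (L u)) (Fin.append (C u) (L u)))
    {q q' s s' : ℕ} (hqq' : q < q') (hq' : q' + 1 < m) (hadj : q' = q + 1 → s < s') :
    D ≤ hammingDist (splice (K (q + 1)) (K q) s) (splice (K (q' + 1)) (K q') s') := by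
  have hblock : ((s ≤ 0 ∨ d ≤ s) ∧ (s' ≤ 0 ∨ d ≤ s')) ∨
      ((s ≤ d ∨ d + l ≤ s) ∧ (s' ≤ d ∨ d + l ≤ s')) ∨
      ((s ≤ d + l ∨ d + l + d ≤ s) ∧ (s' ≤ d + l ∨ d + l + d ≤ s')) ∨
      ((s ≤ d + l + d ∨ d + l + (d + l) ≤ s) ∧ (s' ≤ d + l + d ∨ d + l + (d + l) ≤ s')) := by
    omega
  rcases hblock with ⟨hs, hs'⟩ | ⟨hs, hs'⟩ | ⟨hs, hs'⟩ | ⟨hs, hs'⟩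
  · exact le_hammingDist_splice_of_block hC (e := fun i => Fin.castAdd _ (Fin.castAdd l i))
      ((Fin.castAdd_injective _ _).comp (Fin.castAdd_injective _ _))
      (fun u i => by rw [hK, Fin.append_left, Fin.append_left])
      (fun i => by simp only [Fin.val_castAdd]; omega)
      (fun i => by simp only [Fin.val_castAdd]; omega) hqq' hq' hs hs' hadj
  · exact le_hammingDist_splice_of_block hL (e := fun i => Fin.castAdd _ (Fin.natAdd d i))
      ((Fin.castAdd_injective _ _).comp (Fin.natAdd_injective _ _))
      (fun u i => by rw [hK, Fin.append_left, Fin.append_right])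
      (fun i => by simp only [Fin.val_castAdd, Fin.val_natAdd]; omega)
      (fun i => by simp only [Fin.val_castAdd, Fin.val_natAdd]; omega) hqq' hq' hs hs' hadj
  · exact le_hammingDist_splice_of_block hC (e := fun i => Fin.natAdd _ (Fin.castAdd l i))
      ((Fin.natAdd_injective _ _).comp (Fin.castAdd_injective _ _))
      (fun u i => by rw [hK, Fin.append_right, Fin.append_left])
      (fun i => by simp only [Fin.val_castAdd, Fin.val_natAdd]; omega)
      (fun i => by simp only [Fin.val_castAdd, Fin.val_natAdd]; omega) hqq' hq' hs hs' hadj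
  · exact le_hammingDist_splice_of_block hL (e := fun i => Fin.natAdd _ (Fin.natAdd d i))
      ((Fin.natAdd_injective _ _).comp (Fin.natAdd_injective _ _))
      (fun u i => by rw [hK, Fin.append_right, Fin.append_right])
      (fun i => by simp only [Fin.val_natAdd]; omega)
      (fun i => by simp only [Fin.val_natAdd]; omega) hqq' hq' hs hs' hadj

theorem le_hammingDist_splice_of_lt {m D d l g : ℕ} {C : ℕ → Fin d → Bool}
    {L : ℕ → Fin l → Bool} {K : ℕ → Fin (d + l + (d + l)) → Bool}
    {b : ℕ → Fin g → Fin (d + l + (d + l))} (hC : HasMinDist m D C) (hL : HasMinDist m D L)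
    (hK : ∀ u, K u = Fin.append (Fin.append (C u) (L u)) (Fin.append (C u) (L u)))
    (hinj : ∀ q, q + 1 < m → Injective (b q))
    (hdiff : ∀ q, q + 1 < m → ∀ i, K q (b q i) ≠ K (q + 1) (b q i))
    {q r s q' r' s' : ℕ} (hq : q + 1 < m) (hq' : q' + 1 < m) (hr' : r' ≤ g)
    (hs : ∀ i, (b q i : ℕ) < s ↔ (i : ℕ) < r) (hs' : ∀ i, (b q' i : ℕ) < s' ↔ (i : ℕ) < r')
    (hlt : q * g + r < q' * g + r') (hfar : D ≤ q' * g + r' - (q * g + r)) :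
    D ≤ hammingDist (splice (K (q + 1)) (K q) s) (splice (K (q' + 1)) (K q') s') := by
  rcases lt_trichotomy q q' with hqq' | rfl | hqq'
  · by_cases hadj : q' = q + 1 ∧ s' ≤ s
    · obtain ⟨rfl, hss'⟩ := hadj
      have := add_one_mul q g
      calc D ≤ g - r + r' := by omega
        _ ≤ _ := le_hammingDist_splice_succ (hinj q hq) (hinj _ hq') (hdiff q hq) (hdiff _ hq')
            hr' hs hs' hss'
    · exact le_hammingDist_splice_of_layout hC hL hK hqq' hq' fun h => by omega
  · calc D ≤ r' - r := by omega
      _ ≤ _ := le_hammingDist_splice (hinj q hq) (hdiff q hq) hr' hs hs'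
  · have := Nat.mul_le_mul_right g (show q' + 1 ≤ q from hqq')
    rw [add_one_mul] at this
    omega

end Flips

end GrayCode

open GrayCode

theorem gray_code_large_dist_general (m d D : ℕ)
    (Cenc : ℕ → Fin d → Bool)
    (hdist : ∀ u < m, ∀ v < m, u ≠ v → D ≤ hammingDist (Cenc u) (Cenc v))
    (Lenc : ℕ → Fin (d + D) → Bool)
    (hL : ∀ v, Lenc v = if Even v then Fin.append (Cenc v) (fun _ => false)
        else Fin.append (fun i => !(Cenc v i)) (fun _ => true))
    (Kenc : ℕ → Fin (d + (d + D) + (d + (d + D))) → Bool)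
    (hK : ∀ v, Kenc v =
      Fin.append (Fin.append (Cenc v) (Lenc v)) (Fin.append (Cenc v) (Lenc v)))
    (b : ℕ → Fin (2 * (d + D)) → Fin (d + (d + D) + (d + (d + D))))
    (hmono : ∀ q, q + 1 < m → StrictMono (b q))
    (hdiffb : ∀ q, q + 1 < m → ∀ i, Kenc q (b q i) ≠ Kenc (q + 1) (b q i))
    (Genc : ℕ → Fin (d + (d + D) + (d + (d + D))) → Bool)
    (hG : ∀ q r, r < 2 * (d + D) → q * (2 * (d + D)) + r ≤ (m - 1) * (2 * (d + D)) →
      ∀ j, Genc (q * (2 * (d + D)) + r) j =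
        if ∃ i : Fin (2 * (d + D)), (i : ℕ) < r ∧ b q i = j then Kenc (q + 1) j else Kenc q j)
    (v v' : ℕ) (hv : v ≤ (m - 1) * (2 * (d + D))) (hv' : v' ≤ (m - 1) * (2 * (d + D)))
    (hfar : D ≤ Nat.dist v v') :
    D ≤ hammingDist (Genc v) (Genc v') := by
  obtain rfl | hD := Nat.eq_zero_or_pos D
  · exact Nat.zero_le _
  wlog hvv' : v < v' generalizing v v'
  · obtain hlt | rfl := (not_lt.1 hvv').lt_or_eq
    · rw [hammingDist_comm]
      exact this v' v hv' hv (Nat.dist_comm v v' ▸ hfar) hlt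
    · simp only [Nat.dist_self] at hfar
      omega
  rw [Nat.dist_eq_sub_of_le hvv'.le] at hfar
  obtain rfl : Lenc = fun u => parityPad D u (Cenc u) := funext hL
  have hm : 2 ≤ m := by
    by_contra hm
    rw [show m - 1 = 0 by omega, Nat.zero_mul] at hv'
    omega
  have hcover (q : ℕ) (hq : q + 1 < m) (j) (hj : Kenc q j ≠ Kenc (q + 1) j) : ∃ i, b q i = j :=
    exists_apply_eq_of_hammingDist_eq (hmono q hq).injective (hdiffb q hq)
      (by rw [hK, hK]; exact hammingDist_layout_parityPad_succ D q _ _) hj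
  have hG' (q r) (hr : r < 2 * (d + D)) (hle : q * (2 * (d + D)) + r ≤ (m - 1) * (2 * (d + D))) :
      Genc (q * (2 * (d + D)) + r) = flipPrefix (Kenc q) (Kenc (q + 1)) (b q) r :=
    funext (hG q r hr hle)
  obtain ⟨q, r, s, hq, -, rfl, hs, hGv⟩ := exists_splice_eq (by omega) hmono hcover hG' hm hv
  obtain ⟨q', r', s', hq', hr', rfl, hs', hGv'⟩ :=
    exists_splice_eq (by omega) hmono hcover hG' hm hv'
  rw [hGv, hGv']
  exact le_hammingDist_splice_of_lt hdist (HasMinDist.parityPad hdist) hK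
    (fun q hq => (hmono q hq).injective) hdiffb hq hq' hr' hs hs' hvv' hfar

/-- For the error-correcting Gray code `Genc` built from an injective code `Cenc` of
minimum distance `D` via the four-fold concatenation construction, values at distance
at least `D` have encodings at Hamming distance at least `D`. -/
theorem gray_code_large_dist (m d D : ℕ)
    (Cenc : ℕ → Fin d → Bool)
    (hinj : ∀ u < m, ∀ v < m, Cenc u = Cenc v → u = v)
    (hdist : ∀ u < m, ∀ v < m, u ≠ v → D ≤ hammingDist (Cenc u) (Cenc v))
    (Lenc : ℕ → Fin (d + D) → Bool)
    (hL : ∀ v, Lenc v = if Even v then Fin.append (Cenc v) (fun _ => false)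
        else Fin.append (fun i => !(Cenc v i)) (fun _ => true))
    (Kenc : ℕ → Fin (d + (d + D) + (d + (d + D))) → Bool)
    (hK : ∀ v, Kenc v =
      Fin.append (Fin.append (Cenc v) (Lenc v)) (Fin.append (Cenc v) (Lenc v)))
    (b : ℕ → Fin (2 * (d + D)) → Fin (d + (d + D) + (d + (d + D))))
    (hmono : ∀ q, q + 1 < m → StrictMono (b q))
    (hdiffb : ∀ q, q + 1 < m → ∀ i, Kenc q (b q i) ≠ Kenc (q + 1) (b q i))
    (Genc : ℕ → Fin (d + (d + D) + (d + (d + D))) → Bool)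
    (hG : ∀ q r, r < 2 * (d + D) → q * (2 * (d + D)) + r ≤ (m - 1) * (2 * (d + D)) →
      ∀ j, Genc (q * (2 * (d + D)) + r) j =
        if ∃ i : Fin (2 * (d + D)), (i : ℕ) < r ∧ b q i = j then Kenc (q + 1) j else Kenc q j)
    (v v' : ℕ) (hv : v ≤ (m - 1) * (2 * (d + D))) (hv' : v' ≤ (m - 1) * (2 * (d + D)))
    (hfar : D ≤ Nat.dist v v') :
    D ≤ hammingDist (Genc v) (Genc v') :=
  gray_code_large_dist_general m d D Cenc hdist Lenc hL Kenc hK b hmono hdiffb Genc hG v v' hv hv'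
    hfar
end
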